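/- There exist a real α₀ ∈ (0,1) and an integer v₀ such that for every real α ∈ (0, α₀] and every integer v ≥ v₀, setting p = 2, q = 4 and h = ⌊α·v³⌋, the following holds: for every integer i with 1 ≤ i ≤ h and all integers a, b with 0 ≤ a, 0 ≤ b and a, b ≤ v, one has g_i(a)·g_{i+1}(b) ≤ g_i(a+b). -/

import Mathlib

/-- `T p x` is the degree-`p` Taylor polynomial of the exponential function at `0`. -/
noncomputable def taylorExp (p : ℕ) (x : ℝ) : ℝ :=
  ∑ j ∈ Finset.range (p + 1), x ^ j / (Nat.factorial j : ℝ)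

/-- The round reward polynomial `g_i(x) = T_p(−x/(v^{q−1}·(3 − i/h)))`. -/
noncomputable def roundPoly (v h p q : ℕ) (i : ℕ) (x : ℝ) : ℝ :=
  taylorExp p (-(x / ((v : ℝ) ^ (q - 1) * (3 - (i : ℝ) / (h : ℝ)))))

/-!
Write `T = T₂`, so `T x = 1 + x + x²/2`. Two elementary facts drive the proof: `T` is monotone
on `[-1, ∞)`, and `T s * T t ≤ T (s + t)` for `s ≤ 0` and `-2 ≤ t ≤ 0`, the defect being
`(s t / 2)(s + t + s t / 2) ≤ 0`. The denominator `c_{i+1} = v^{q-1}(3 - (i+1)/h)` of `g_{i+1}`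
lies between `v` and `c_i`, so `g_{i+1}(b) ≤ T(-b/c_i)` with `b / c_i ≤ 1`, and the product inequality merges
the two factors into `g_i(a + b)`.
-/

lemma taylorExp_two (x : ℝ) : taylorExp 2 x = 1 + x + x ^ 2 / 2 := by
  simp [taylorExp, Finset.sum_range_succ, Nat.factorial]

lemma taylorExp_two_nonneg (x : ℝ) : 0 ≤ taylorExp 2 x := by
  rw [taylorExp_two]; nlinarith [sq_nonneg (x + 1)]

lemma taylorExp_two_monotoneOn : MonotoneOn (taylorExp 2) (Set.Ici (-1)) := by
  intro s hs t ht hst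
  rw [Set.mem_Ici] at hs ht
  rw [taylorExp_two, taylorExp_two]
  nlinarith

lemma taylorExp_two_mul_le {s t : ℝ} (hs : s ≤ 0) (ht : -2 ≤ t) (ht' : t ≤ 0) :
    taylorExp 2 s * taylorExp 2 t ≤ taylorExp 2 (s + t) := by
  have hst : 0 ≤ s * t := mul_nonneg_of_nonpos_of_nonpos hs ht'
  have hsum : s + t + s * t / 2 ≤ 0 := by nlinarith
  rw [taylorExp_two, taylorExp_two, taylorExp_two]
  nlinarith [mul_nonpos_of_nonneg_of_nonpos hst hsum]

lemma taylorExp_two_neg_div_mul_le {a b c c' : ℝ} (ha : 0 ≤ a) (hb : 0 ≤ b) (hc' : 0 < c')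
    (hbc' : b ≤ c') (hc'c : c' ≤ c) :
    taylorExp 2 (-(a / c)) * taylorExp 2 (-(b / c')) ≤ taylorExp 2 (-((a + b) / c)) := by
  have hc : 0 < c := hc'.trans_le hc'c
  have hbc : b / c ≤ b / c' := div_le_div_of_nonneg_left hb hc' hc'c
  have hbc'_le_one : b / c' ≤ 1 := (div_le_one hc').2 hbc'
  calc taylorExp 2 (-(a / c)) * taylorExp 2 (-(b / c'))
      ≤ taylorExp 2 (-(a / c)) * taylorExp 2 (-(b / c)) := by
        refine mul_le_mul_of_nonneg_left ?_ (taylorExp_two_nonneg _)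
        exact taylorExp_two_monotoneOn (Set.mem_Ici.2 (by linarith)) (Set.mem_Ici.2 (by linarith))
          (by linarith)
    _ ≤ taylorExp 2 (-(a / c) + -(b / c)) :=
        taylorExp_two_mul_le (neg_nonpos.2 (by positivity)) (by linarith) (neg_nonpos.2 (by positivity))
    _ = taylorExp 2 (-((a + b) / c)) := by ring_nf

lemma roundPoly_mul_roundPoly_succ_le {v h q i : ℕ} {a b : ℝ} (hv : 1 ≤ v) (hq : 2 ≤ q)
    (hih : i + 1 ≤ 2 * h) (ha : 0 ≤ a) (hb : 0 ≤ b) (hbv : b ≤ v) :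
    roundPoly v h 2 q i a * roundPoly v h 2 q (i + 1) b ≤ roundPoly v h 2 q i (a + b) := by
  have hv' : (1 : ℝ) ≤ v := by exact_mod_cast hv
  have hh : (0 : ℝ) < h := by exact_mod_cast (by omega : 0 < h)
  have hih' : ((i : ℝ) + 1) / h ≤ 2 := by
    rw [div_le_iff₀ hh]; exact_mod_cast hih
  have hvpow : (v : ℝ) ≤ (v : ℝ) ^ (q - 1) := le_self_pow₀ hv' (by omega)
  have hmono : (i : ℝ) / h ≤ ((i : ℝ) + 1) / h := by gcongr; linarith
  unfold roundPoly
  push_cast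
  apply taylorExp_two_neg_div_mul_le ha hb <;> nlinarith

/-- consequence of Claim 3.2 used in Lemma 4.5, regime `p = 2`, `q = 4`,
`h = ⌊α·v³⌋`: there exist `α₀ ∈ (0,1)` and `v₀` such that for all `α ∈ (0, α₀]` and
`v ≥ v₀`, for every `1 ≤ i ≤ h` and all integers `0 ≤ a, b ≤ v`,
`g_i(a)·g_{i+1}(b) ≤ g_i(a+b)`. -/
theorem roundPoly_merge_rounds :
    ∃ α₀ : ℝ, α₀ ∈ Set.Ioo (0 : ℝ) 1 ∧ ∃ v₀ : ℕ,
      ∀ α : ℝ, 0 < α → α ≤ α₀ → ∀ v : ℕ, v₀ ≤ v →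
        ∀ h : ℕ, h = ⌊α * (v : ℝ) ^ 3⌋₊ →
          ∀ i a b : ℕ, 1 ≤ i → i ≤ h → a ≤ v → b ≤ v →
            roundPoly v h 2 4 i (a : ℝ) * roundPoly v h 2 4 (i + 1) (b : ℝ)
              ≤ roundPoly v h 2 4 i ((a : ℝ) + (b : ℝ)) := by
  refine ⟨1 / 2, ⟨by norm_num, by norm_num⟩, 1, ?_⟩
  intro _ _ _ v hv h _ i a b hi hih _ hb
  exact roundPoly_mul_roundPoly_succ_le hv (by norm_num) (by omega) (Nat.cast_nonneg a)
    (Nat.cast_nonneg b) (by exact_mod_cast hb)
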